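/- Let A ∈ B(H)^d and B ∈ B(K)^d be d-tuples of operators. Then the one-sided matrix range distance d_mr(A→B) := sup_n sup_{X ∈ W_n(A)} inf_{Y ∈ W_n(B)} ‖X - Y‖ satisfies d_mr(A→B) ≤ inf{ ‖A - Ψ(B)‖ : Ψ a unital completely positive map from the operator system of B to B(H) }. -/

import Mathlib

open scoped Matrix.Norms.L2Operator

/-- A linear map between complex star algebras is *unital completely positive* if it is unital
and, for every `n`, the entrywise induced map on `n × n` matrices maps positive elements
(elements of the form `y* y`) to positive elements. -/
def IsUCP {A B : Type*} [Ring A] [StarRing A] [Algebra ℂ A] [Ring B] [StarRing B] [Algebra ℂ B]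
    (Φ : A →ₗ[ℂ] B) : Prop :=
  Φ 1 = 1 ∧ ∀ (n : ℕ) (x : Matrix (Fin n) (Fin n) A),
    (∃ y : Matrix (Fin n) (Fin n) A, x = star y * y) → ∃ z : Matrix (Fin n) (Fin n) B, x.map Φ = star z * z

/-- The `n`-th level of the matrix range of a `d`-tuple `A` of operators:
`W_n(A) = {(φ(A_1),…,φ(A_d)) : φ : B(H) → M_n UCP}`. -/
def matRange {d : ℕ} {H : Type*} [NormedAddCommGroup H] [InnerProductSpace ℂ H]
    [CompleteSpace H] (A : Fin d → H →L[ℂ] H) (n : ℕ) :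
    Set (Fin d → Matrix (Fin n) (Fin n) ℂ) :=
  {X | ∃ φ : (H →L[ℂ] H) →ₗ[ℂ] Matrix (Fin n) (Fin n) ℂ, IsUCP φ ∧ X = fun i => φ (A i)}

/-!
If `X = φ(A) ∈ W_n(A)` and `Ψ` is UCP, then `φ(Ψ(B)) ∈ W_n(B)` and `X - φ(Ψ(B)) = φ(A - Ψ(B))`,
so the theorem reduces to contractivity of UCP maps, `‖φ T‖ ≤ ‖T‖`. This is the usual
2-positivity argument: `!![‖T‖, T; T*, ‖T‖]` is positive, so its image under `φ` is `z* z` with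
diagonal entries `‖T‖ • 1`, and Cauchy–Schwarz bounds the corner `φ T = z₀₀* z₀₁ + z₁₀* z₁₁`.

If there is no UCP map `B(K) → B(H)`, the right-hand side is `sInf ∅ = 0`. Then `W_n(B)` is empty
for `n ≥ 1`, since a UCP map into `M_n` followed by a diagonal entry and `ℂ → B(H)` would be one,
and at level `0` all distances vanish.
-/

section UCP

variable {A B C : Type*} [Ring A] [StarRing A] [Algebra ℂ A] [Ring B] [StarRing B] [Algebra ℂ B]
  [Ring C] [StarRing C] [Algebra ℂ C]

theorem IsUCP.comp {ψ : B →ₗ[ℂ] C} {φ : A →ₗ[ℂ] B} (hψ : IsUCP ψ) (hφ : IsUCP φ) :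
    IsUCP (ψ ∘ₗ φ) := by
  refine ⟨by simp [hφ.1, hψ.1], fun n x hx => ?_⟩
  obtain ⟨w, hw⟩ := hψ.2 n (x.map φ) (hφ.2 n x hx)
  exact ⟨w, by rw [← hw, Matrix.map_map]; rfl⟩

theorem StarAlgHom.isUCP (f : A →⋆ₐ[ℂ] B) : IsUCP f.toAlgHom.toLinearMap := by
  refine ⟨map_one f, fun n x ⟨y, hy⟩ => ⟨y.map f, ?_⟩⟩
  subst hy
  ext i j
  simp [Matrix.mul_apply, Matrix.star_apply, map_sum, map_star]

end UCP

open scoped Matrix MatrixOrder ComplexOrder in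
theorem Matrix.isUCP_entryLinearMap {n : ℕ} (i : Fin n) :
    IsUCP (Matrix.entryLinearMap ℂ ℂ i i) := by
  refine ⟨by simp, fun k x ⟨y, hy⟩ => ?_⟩
  let v : Matrix (Fin k × Fin n) (Fin k) ℂ := Matrix.of fun lp b => y lp.1 b lp.2 i
  have hGram : x.map (Matrix.entryLinearMap ℂ ℂ i i) = vᴴ * v := by
    subst hy
    ext a b
    simp [v, Matrix.mul_apply, Fintype.sum_prod_type]
  rw [hGram]
  exact CStarAlgebra.nonneg_iff_eq_star_mul_self.mp
    (Matrix.posSemidef_conjTranspose_mul_self v).nonneg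

theorem IsUCP.exists_isUCP_of_matrix {A : Type*} [Ring A] [StarRing A] [Algebra ℂ A] {n : ℕ}
    (hn : 0 < n) {φ : A →ₗ[ℂ] Matrix (Fin n) (Fin n) ℂ} (hφ : IsUCP φ)
    (B : Type*) [Ring B] [StarRing B] [Algebra ℂ B] [StarModule ℂ B] :
    ∃ Ψ : A →ₗ[ℂ] B, IsUCP Ψ :=
  ⟨_, ((StarAlgHom.ofId ℂ B).isUCP.comp (Matrix.isUCP_entryLinearMap ⟨0, hn⟩)).comp hφ⟩

theorem CStarAlgebra.exists_star_mul_self_eq_of_norm_le {A : Type*} [CStarAlgebra A]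
    [PartialOrder A] [StarOrderedRing A] (T : A) {c : ℝ} (hc : 0 < c) (hT : ‖T‖ ≤ c) :
    ∃ y : Matrix (Fin 2) (Fin 2) A, !![c • 1, T; star T, c • 1] = star y * y := by
  have hTT : star T * T ≤ (c * c) • (1 : A) := by
    calc star T * T ≤ algebraMap ℝ A ‖star T * T‖ := IsSelfAdjoint.le_algebraMap_norm_self
      _ = (‖T‖ * ‖T‖) • (1 : A) := by
        rw [CStarRing.norm_star_mul_self, Algebra.algebraMap_eq_smul_one]
      _ ≤ (c * c) • (1 : A) := by gcongr
  obtain ⟨s, hs⟩ : ∃ s : A, c • 1 - c⁻¹ • (star T * T) = star s * s := by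
    refine CStarAlgebra.nonneg_iff_eq_star_mul_self.mp (sub_nonneg.mpr ?_)
    calc c⁻¹ • (star T * T) ≤ c⁻¹ • ((c * c) • (1 : A)) := by gcongr
      _ = c • 1 := by rw [smul_smul, inv_mul_cancel_left₀ hc.ne']
  have hsq : √c * √c = c := Real.mul_self_sqrt hc.le
  have hsq_ne : √c ≠ 0 := (Real.sqrt_pos.mpr hc).ne'
  -- upper triangular factor: `!![c, T; T*, c] = y* y`, the defect `c - T* T / c` being `s* s`
  refine ⟨!![√c • 1, (√c)⁻¹ • T; 0, s], ?_⟩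
  ext i j
  fin_cases i <;> fin_cases j <;>
    simp [Matrix.mul_apply, Fin.sum_univ_two, Matrix.star_apply, star_smul, smul_smul, hsq]
  · rw [inv_mul_cancel₀ hsq_ne, one_smul]
  · rw [mul_inv_cancel₀ hsq_ne, one_smul]
  · rw [← hs, ← mul_inv, hsq, add_sub_cancel]

namespace ContinuousLinearMap

variable {E : Type*} [NormedAddCommGroup E] [InnerProductSpace ℂ E] [CompleteSpace E]

theorem norm_sq_add_norm_sq_eq_of_star_mul_add {p q : E →L[ℂ] E} {c : ℝ}
    (h : star p * p + star q * q = c • 1) (w : E) :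
    ‖p w‖ ^ 2 + ‖q w‖ ^ 2 = c * ‖w‖ ^ 2 := by
  calc ‖p w‖ ^ 2 + ‖q w‖ ^ 2 = RCLike.re (inner ℂ ((star p * p + star q * q) w) w) := by
        rw [apply_norm_sq_eq_inner_adjoint_left p, apply_norm_sq_eq_inner_adjoint_left q,
          add_apply, inner_add_left, map_add]
        rfl
    _ = c * ‖w‖ ^ 2 := by
        rw [h, smul_apply, one_apply_eq_self, RCLike.real_smul_eq_coe_smul (K := ℂ),
          inner_smul_real_left, RCLike.smul_re, inner_self_eq_norm_sq]

theorem norm_star_mul_add_star_mul_le {a₀ a₁ d₀ d₁ : E →L[ℂ] E} {c : ℝ} (hc : 0 ≤ c)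
    (ha : star a₀ * a₀ + star a₁ * a₁ = c • 1) (hd : star d₀ * d₀ + star d₁ * d₁ = c • 1) :
    ‖star a₀ * d₀ + star a₁ * d₁‖ ≤ c := by
  refine opNorm_le_of_re_inner_le hc fun v u hv hu => ?_
  have hu' := norm_sq_add_norm_sq_eq_of_star_mul_add ha u
  have hv' := norm_sq_add_norm_sq_eq_of_star_mul_add hd v
  rw [hu, one_pow, mul_one] at hu'
  rw [hv, one_pow, mul_one] at hv'
  have h₀ := re_inner_le_norm (𝕜 := ℂ) (d₀ v) (a₀ u)
  have h₁ := re_inner_le_norm (𝕜 := ℂ) (d₁ v) (a₁ u)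
  calc RCLike.re (inner ℂ ((star a₀ * d₀ + star a₁ * d₁) v) u)
      = RCLike.re (inner ℂ (d₀ v) (a₀ u)) + RCLike.re (inner ℂ (d₁ v) (a₁ u)) := by
        simp [star_eq_adjoint, adjoint_inner_left]
    _ ≤ c := by
        -- AM-GM: `x p + y q ≤ (x² + p² + y² + q²) / 2 = c` for the four norms
        nlinarith [sq_nonneg (‖d₀ v‖ - ‖a₀ u‖), sq_nonneg (‖d₁ v‖ - ‖a₁ u‖)]

end ContinuousLinearMap

section Contractive

variable {A : Type*} [CStarAlgebra A] [PartialOrder A] [StarOrderedRing A]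

theorem IsUCP.norm_apply_le {E : Type*} [NormedAddCommGroup E] [InnerProductSpace ℂ E]
    [CompleteSpace E] {φ : A →ₗ[ℂ] (E →L[ℂ] E)} (hφ : IsUCP φ) (a : A) : ‖φ a‖ ≤ ‖a‖ := by
  rcases eq_or_ne a 0 with rfl | ha
  · simp
  obtain ⟨y, hy⟩ := CStarAlgebra.exists_star_mul_self_eq_of_norm_le a (norm_pos_iff.mpr ha) le_rfl
  obtain ⟨z, hz⟩ := hφ.2 2 _ ⟨y, hy⟩
  have hentry (i j : Fin 2) :
      (star z * z) i j = star (z 0 i) * z 0 j + star (z 1 i) * z 1 j := by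
    simp [Matrix.mul_apply, Fin.sum_univ_two, Matrix.star_apply]
  have hdiag (i : Fin 2) : star (z 0 i) * z 0 i + star (z 1 i) * z 1 i = ‖a‖ • 1 := by
    rw [← hentry, ← hz]
    fin_cases i <;> simp [LinearMap.map_smul_of_tower, hφ.1]
  have hcorner : φ a = star (z 0 0) * z 0 1 + star (z 1 0) * z 1 1 := by
    rw [← hentry, ← hz]
    simp
  rw [hcorner]
  exact ContinuousLinearMap.norm_star_mul_add_star_mul_le (norm_nonneg a) (hdiag 0) (hdiag 1)

theorem IsUCP.norm_apply_le_of_matrix {n : ℕ} {φ : A →ₗ[ℂ] Matrix (Fin n) (Fin n) ℂ}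
    (hφ : IsUCP φ) (a : A) : ‖φ a‖ ≤ ‖a‖ := by
  rw [Matrix.cstar_norm_def]
  exact ((Matrix.toEuclideanCLM (n := Fin n) (𝕜 := ℂ)).toStarAlgHom.isUCP.comp hφ).norm_apply_le a

end Contractive

section MatrixRange

variable {d : ℕ} {H K : Type*}
  [NormedAddCommGroup H] [InnerProductSpace ℂ H] [CompleteSpace H]
  [NormedAddCommGroup K] [InnerProductSpace ℂ K] [CompleteSpace K]
  {A : Fin d → H →L[ℂ] H} {B : Fin d → K →L[ℂ] K} {n : ℕ}

theorem sInf_dist_matRange_le {X : Fin d → Matrix (Fin n) (Fin n) ℂ} (hX : X ∈ matRange A n)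
    {Ψ : (K →L[ℂ] K) →ₗ[ℂ] (H →L[ℂ] H)} (hΨ : IsUCP Ψ) :
    sInf {s : ℝ | ∃ Y ∈ matRange B n, s = ⨆ i, ‖X i - Y i‖} ≤ ⨆ i, ‖A i - Ψ (B i)‖ := by
  obtain ⟨φ, hφ, rfl⟩ := hX
  refine csInf_le_of_le ⟨0, ?_⟩ ⟨_, ⟨φ ∘ₗ Ψ, hφ.comp hΨ, rfl⟩, rfl⟩ ?_
  · rintro _ ⟨Y, -, rfl⟩
    exact Real.iSup_nonneg fun i => norm_nonneg _
  · refine ciSup_mono (Set.finite_range _).bddAbove fun i => ?_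
    rw [LinearMap.comp_apply, ← map_sub]
    exact hφ.norm_apply_le_of_matrix _

theorem sInf_dist_matRange_nonpos (hR : ¬∃ Ψ : (K →L[ℂ] K) →ₗ[ℂ] (H →L[ℂ] H), IsUCP Ψ)
    (X : Fin d → Matrix (Fin n) (Fin n) ℂ) :
    sInf {s : ℝ | ∃ Y ∈ matRange B n, s = ⨆ i, ‖X i - Y i‖} ≤ 0 := by
  refine Real.sInf_nonpos ?_
  rintro _ ⟨Y, ⟨ψ, hψ, -⟩, rfl⟩
  rcases n with _ | n
  · simp [Subsingleton.elim (X _ - Y _) 0]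
  · exact absurd (hψ.exists_isUCP_of_matrix n.succ_pos _) hR

end MatrixRange

/-- For `d`-tuples `A ∈ B(H)^d`, `B ∈ B(K)^d`, the one-sided matrix range
distance `d_mr(A→B) = sup_n sup_{X ∈ W_n(A)} inf_{Y ∈ W_n(B)} ‖X - Y‖` is at most
`inf{‖A - Ψ(B)‖ : Ψ : B(K) → B(H) UCP}`. -/
theorem stmt_11 {d : ℕ} {H K : Type*}
    [NormedAddCommGroup H] [InnerProductSpace ℂ H] [CompleteSpace H]
    [NormedAddCommGroup K] [InnerProductSpace ℂ K] [CompleteSpace K]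
    (A : Fin d → H →L[ℂ] H) (B : Fin d → K →L[ℂ] K) :
    (⨆ n : ℕ, sSup {r : ℝ | ∃ X ∈ matRange A n,
        r = sInf {s : ℝ | ∃ Y ∈ matRange B n, s = ⨆ i, ‖X i - Y i‖}}) ≤
      sInf {r : ℝ | ∃ Ψ : (K →L[ℂ] K) →ₗ[ℂ] (H →L[ℂ] H), IsUCP Ψ ∧
        r = ⨆ i, ‖A i - Ψ (B i)‖} := by
  have hR_nonneg : 0 ≤ sInf {r : ℝ | ∃ Ψ : (K →L[ℂ] K) →ₗ[ℂ] (H →L[ℂ] H), IsUCP Ψ ∧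
      r = ⨆ i, ‖A i - Ψ (B i)‖} :=
    Real.sInf_nonneg fun _ ⟨_, _, hr⟩ => hr ▸ Real.iSup_nonneg fun _ => norm_nonneg _
  refine ciSup_le fun n => Real.sSup_le ?_ hR_nonneg
  rintro _ ⟨X, hX, rfl⟩
  by_cases hR : ∃ Ψ : (K →L[ℂ] K) →ₗ[ℂ] (H →L[ℂ] H), IsUCP Ψ
  · obtain ⟨Ψ₀, hΨ₀⟩ := hR
    refine le_csInf ⟨_, Ψ₀, hΨ₀, rfl⟩ ?_
    rintro _ ⟨Ψ, hΨ, rfl⟩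
    exact sInf_dist_matRange_le hX hΨ
  · exact (sInf_dist_matRange_nonpos hR X).trans hR_nonneg
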